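/- arXiv:math/0607164 — 2 statements merged into one kernel-verified Lean document; each statement's English description precedes it below -/
import Mathlib

section
/- Let $\sigma$ be a convex polyhedral cone in a finite-dimensional real vector space $V$, i.e. $\sigma = \{r_1 v_1 + \cdots + r_k v_k : r_i \geq 0\}$ for finitely many vectors $v_1,\ldots,v_k \in V$. Let $\check\sigma = \{u \in V^* : \langle u, v\rangle \geq 0 \text{ for all } v \in \sigma\}$ be its dual. Then $(\check\sigma)^\vee = \sigma$, i.e. the double dual of $\sigma$ equals $\sigma$. -/
/-! By Carathéodory's theorem for cones, the cone generated by `v` is the finite union of the cones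
generated by its linearly independent subfamilies; each of these is the image of a closed orthant
under an injective linear map, hence closed. So once `V` carries any norm, the cone is a closed
convex cone, and Farkas' lemma (Hahn–Banach separation) separates every point outside it from the
cone by a linear functional. -/

open Finset

section Caratheodory

variable {ι V : Type*} [AddCommGroup V] [Module ℝ V]

theorem exists_mul_le_and_mul_eq (s : Finset ι) {r f : ι → ℝ} (hr : ∀ i ∈ s, 0 ≤ r i)
    (hf : ∃ i ∈ s, 0 < f i) : ∃ τ : ℝ, (∀ i ∈ s, τ * f i ≤ r i) ∧ ∃ j ∈ s, τ * f j = r j := by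
  obtain ⟨j, hj, hjmin⟩ := (s.filter (0 < f ·)).exists_min_image (fun i => r i / f i)
    (by simpa [Finset.Nonempty] using hf)
  rw [mem_filter] at hj
  have hτ : 0 ≤ r j / f j := div_nonneg (hr j hj.1) hj.2.le
  refine ⟨r j / f j, fun i hi => ?_, j, hj.1, div_mul_cancel₀ _ hj.2.ne'⟩
  rcases lt_or_ge 0 (f i) with hfi | hfi
  · exact (le_div_iff₀ hfi).1 (hjmin i (mem_filter.2 ⟨hi, hfi⟩))
  · exact (mul_nonpos_of_nonneg_of_nonpos hτ hfi).trans (hr i hi)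

theorem exists_linearIndepOn_nonneg_sum_eq (v : ι → V) (s : Finset ι) {r : ι → ℝ}
    (hr : ∀ i ∈ s, 0 ≤ r i) :
    ∃ t ⊆ s, LinearIndepOn ℝ v (t : Set ι) ∧
      ∃ c : ι → ℝ, (∀ i ∈ t, 0 ≤ c i) ∧ ∑ i ∈ t, c i • v i = ∑ i ∈ s, r i • v i := by
  classical
  induction s using Finset.strongInduction generalizing r with
  | H s ih =>
  by_cases hs : LinearIndepOn ℝ v (s : Set ι)
  · exact ⟨s, subset_rfl, hs, r, hr, rfl⟩
  obtain ⟨f, hf0, hfpos⟩ : ∃ f : ι → ℝ, ∑ i ∈ s, f i • v i = 0 ∧ ∃ i ∈ s, 0 < f i := by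
    obtain ⟨f, hf0, i, hi, hfi⟩ := not_linearIndepOn_finset_iff.mp hs
    rcases hfi.lt_or_gt with h | h
    · exact ⟨-f, by simp [hf0], i, hi, by simpa using h⟩
    · exact ⟨f, hf0, i, hi, h⟩
  obtain ⟨τ, hτ, j, hj, hτj⟩ := exists_mul_le_and_mul_eq s hr hfpos
  obtain ⟨t, hts, ht, c, hc, hct⟩ := ih (s.erase j) (erase_ssubset hj) (r := r - τ • f)
    (fun i hi => sub_nonneg.2 (hτ i (mem_of_mem_erase hi)))
  refine ⟨t, hts.trans (erase_subset j s), ht, c, hc, ?_⟩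
  calc ∑ i ∈ t, c i • v i = ∑ i ∈ s.erase j, (r - τ • f) i • v i := hct
    _ = ∑ i ∈ s, (r - τ • f) i • v i := sum_erase _ (by simp [hτj])
    _ = ∑ i ∈ s, r i • v i := by
      simp [sub_smul, sum_sub_distrib, mul_smul, ← smul_sum, hf0]

variable [Fintype ι]

theorem image_linearCombination_subtype_nonneg_subset (v : ι → V) (t : Finset ι) :
    Fintype.linearCombination ℝ (fun i : t => v i) '' Set.Ici 0 ⊆
      Fintype.linearCombination ℝ v '' Set.Ici 0 := by
  rintro _ ⟨c, hc, rfl⟩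
  have hextend (i : t) : Function.extend Subtype.val c 0 i = c i :=
    Subtype.val_injective.extend_apply c 0 i
  have hzero (i : ι) (hi : i ∉ t) : Function.extend Subtype.val c 0 i = 0 := by
    simp [Function.extend_apply', hi]
  refine ⟨Function.extend Subtype.val c 0, fun i => ?_, ?_⟩
  · by_cases hi : i ∈ t
    · lift i to t using hi
      exact (hextend i).symm ▸ hc i
    · exact (hzero i hi).ge
  · simp only [Fintype.linearCombination_apply]
    rw [← sum_subset (subset_univ t) fun i _ hi => by simp [hzero i hi], ← sum_coe_sort]
    simp only [hextend]

theorem image_linearCombination_nonneg_eq_iUnion (v : ι → V) :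
    Fintype.linearCombination ℝ v '' Set.Ici 0 =
      ⋃ (t : Finset ι) (_ : LinearIndepOn ℝ v (t : Set ι)),
        Fintype.linearCombination ℝ (fun i : t => v i) '' Set.Ici 0 := by
  refine Set.Subset.antisymm ?_ (Set.iUnion₂_subset fun t _ =>
    image_linearCombination_subtype_nonneg_subset v t)
  rintro _ ⟨r, hr, rfl⟩
  obtain ⟨t, -, ht, c, hc, hct⟩ :=
    exists_linearIndepOn_nonneg_sum_eq v univ fun i _ => Set.mem_Ici.1 hr i
  refine Set.mem_iUnion₂.2 ⟨t, ht, fun i => c i, fun i => hc i i.2, ?_⟩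
  rw [Fintype.linearCombination_apply, Fintype.linearCombination_apply, ← hct]
  exact sum_coe_sort t fun i => c i • v i

end Caratheodory

section Closed

variable {E : Type*} [AddCommGroup E] [Module ℝ E] [TopologicalSpace E] [IsTopologicalAddGroup E]
  [ContinuousSMul ℝ E] [T2Space E]

theorem LinearIndependent.isClosed_image_nonneg {κ : Type*} [Fintype κ] {w : κ → E}
    (hw : LinearIndependent ℝ w) : IsClosed (Fintype.linearCombination ℝ w '' Set.Ici 0) :=
  (LinearMap.isClosedEmbedding_of_injective (LinearMap.ker_eq_bot.2
    hw.fintypeLinearCombination_injective)).isClosedMap _ isClosed_Ici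

theorem isClosed_image_linearCombination_nonneg {ι : Type*} [Fintype ι] (v : ι → E) :
    IsClosed (Fintype.linearCombination ℝ v '' Set.Ici 0) := by
  rw [image_linearCombination_nonneg_eq_iUnion]
  exact isClosed_iUnion_of_finite fun t =>
    isClosed_iUnion_of_finite fun ht => ht.isClosed_image_nonneg

end Closed

theorem ProperCone.setOf_forall_dual_nonneg_eq {E : Type*} [AddCommGroup E] [Module ℝ E]
    [TopologicalSpace E] [IsTopologicalAddGroup E] [ContinuousSMul ℝ E] [LocallyConvexSpace ℝ E]
    (C : ProperCone ℝ E) :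
    {x : E | ∀ u : Module.Dual ℝ E, (∀ y ∈ C, 0 ≤ u y) → 0 ≤ u x} = C := by
  refine Set.Subset.antisymm (fun x hx => ?_) (fun x hx u hu => hu x hx)
  by_contra hxC
  obtain ⟨f, hf, hfx⟩ := C.hyperplane_separation_point hxC
  exact hfx.not_ge (hx f hf)

/-- A convex polyhedral cone in a finite-dimensional real vector space equals
its double dual: `(σ̌)∨ = σ`. -/
theorem doubleDual_of_polyhedralCone
    (V : Type*) [AddCommGroup V] [Module ℝ V] [FiniteDimensional ℝ V]
    (k : ℕ) (v : Fin k → V) (σ : Set V)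
    (hσ : σ = {x : V | ∃ r : Fin k → ℝ, (∀ i, 0 ≤ r i) ∧ x = ∑ i, r i • v i}) :
    {x : V | ∀ u : Module.Dual ℝ V, (∀ y ∈ σ, 0 ≤ u y) → 0 ≤ u x} = σ := by
  let e := (Module.finBasis ℝ V).equivFun
  let := NormedAddCommGroup.induced V _ e e.injective
  let := NormedSpace.induced ℝ V _ e
  let C : ProperCone ℝ V :=
    ⟨(PointedCone.positive ℝ (Fin k → ℝ)).map (Fintype.linearCombination ℝ v),
      isClosed_image_linearCombination_nonneg v⟩
  have hσC : σ = C := by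
    rw [hσ]
    ext x
    change _ ↔ x ∈ Fintype.linearCombination ℝ v '' Set.Ici 0
    simp [eq_comm, Pi.le_def, Fintype.linearCombination_apply]
  rw [hσC]
  exact C.setOf_forall_dual_nonneg_eq
end

section
/- Define polynomials $\alpha(\delta)$ and $\beta(\Delta)$ in $T$ by mutual induction on dimension: $\alpha(\{0\}) = 1$; $\beta(\Delta) = (T^2-1)^{\dim\Delta} + \sum_{\tau \text{ proper face of }\Delta} (T^2-1)^{\dim\tau}\alpha(\mathrm{cone}^\circ_\Delta(\tau))$; $\alpha(\delta) = \mathrm{trunc}_{\leq \dim\delta - 1}((1-T^2)\beta(\mathrm{poly}(\delta)))$. Then if $\delta$ is a simplicial cone (generated by linearly independent vectors), $\alpha(\delta) = 1$. -/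
/-!
Induction on the number `k` of generators. A family `cᵢ` dual to the independent generators `vᵢ`
gives coordinates: the slice `∑ cᵢ = 1` of the cone is the simplex `conv(v₁, …, vₖ)` of
dimension `k - 1`, its proper faces are the `conv(vᵢ : i ∈ S)` for `∅ ≠ S ≠ univ`, of dimension
`|S| - 1`, and the cone at such a face, taken modulo the direction of the face, is again
simplicial, generated by the classes of `vⱼ - v_{i₀}` (`j ∉ S`, `i₀ ∈ S`). By induction its `α`
is `1`, so `β(conv v) = ∑_{S ≠ ∅} (T² - 1)^{|S| - 1}`, and the binomial theorem gives
`(1 - T²) β(conv v) = 1 - ∑_S (T² - 1)^{|S|} = 1 - T^{2k}`, whose truncation below degree `k`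
is `1`.
-/

open Polynomial

/-- The cone generated by the differences `u' - u`, `u' ∈ Δ`, `u ∈ τ`. -/
def coneOfFaceSet (V : Type) [AddCommGroup V] [Module ℝ V] (Δ τ : Set V) : Set V :=
  {x | ∃ (m : ℕ) (t : Fin m → ℝ) (p q : Fin m → V),
    (∀ i, 0 ≤ t i) ∧ (∀ i, p i ∈ Δ) ∧ (∀ i, q i ∈ τ) ∧ x = ∑ i, t i • (p i - q i)}

section ConeHull

variable {V : Type} [AddCommGroup V] [Module ℝ V] {ι κ : Type} [Fintype ι] [Fintype κ]

def coneHull (v : ι → V) : Set V :=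
  {x | ∃ r : ι → ℝ, (∀ i, 0 ≤ r i) ∧ x = ∑ i, r i • v i}

theorem coneHull_of_isEmpty [IsEmpty ι] (v : ι → V) : coneHull v = {0} := by
  ext x
  simp [coneHull]

theorem coneHull_comp_equiv (e : κ ≃ ι) (v : ι → V) : coneHull (v ∘ e) = coneHull v := by
  ext x
  constructor
  · rintro ⟨r, hr, rfl⟩
    exact ⟨r ∘ e.symm, fun i => hr _, by simp [← e.sum_comp]⟩
  · rintro ⟨r, hr, rfl⟩
    exact ⟨r ∘ e, fun i => hr _, (e.sum_comp fun i => r i • v i).symm⟩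

theorem mem_coneHull_self [DecidableEq ι] (v : ι → V) (i : ι) : v i ∈ coneHull v :=
  ⟨Pi.single i 1, fun j => by by_cases h : j = i <;> simp [h], by simp [Pi.single_apply]⟩

theorem coneHull_subset_span (v : ι → V) : coneHull v ⊆ Submodule.span ℝ (Set.range v) := by
  rintro _ ⟨r, -, rfl⟩
  exact Submodule.sum_mem _ fun i _ => Submodule.smul_mem _ _ (Submodule.subset_span ⟨i, rfl⟩)

theorem sum_smul_mem_coneHull {v : ι → V} (t : κ → ℝ) (ht : ∀ l, 0 ≤ t l) {x : κ → V}
    (hx : ∀ l, x l ∈ coneHull v) : ∑ l, t l • x l ∈ coneHull v := by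
  choose r hr hxr using hx
  refine ⟨fun i => ∑ l, t l * r l i,
    fun i => Finset.sum_nonneg fun l _ => mul_nonneg (ht l) (hr l i), ?_⟩
  simp_rw [hxr, Finset.smul_sum, smul_smul, Finset.sum_smul]
  exact Finset.sum_comm

theorem vectorSpan_coneHull (v : ι → V) :
    vectorSpan ℝ (coneHull v) = Submodule.span ℝ (Set.range v) := by
  classical
  have hzero : (0 : V) ∈ coneHull v := ⟨0, fun _ => le_rfl, by simp⟩
  rw [vectorSpan_eq_span_vsub_set_right ℝ hzero]
  simp only [vsub_eq_sub, sub_zero, Set.image_id']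
  exact le_antisymm (Submodule.span_le.2 (coneHull_subset_span v))
    (Submodule.span_mono (Set.range_subset_iff.2 (mem_coneHull_self v)))

theorem coneHull_ne_singleton_zero [Nonempty ι] {v : ι → V} (hv : LinearIndependent ℝ v) :
    coneHull v ≠ {0} := by
  classical
  obtain ⟨i⟩ := ‹Nonempty ι›
  exact fun h => hv.ne_zero i (by simpa [h] using mem_coneHull_self v i)

end ConeHull

theorem finrank_vectorSpan_coneHull {V ι : Type} [AddCommGroup V] [Module ℝ V] [Fintype ι]
    {v : ι → V} (hv : LinearIndependent ℝ v) :
    Module.finrank ℝ (vectorSpan ℝ (coneHull v)) = Fintype.card ι := by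
  rw [vectorSpan_coneHull, finrank_span_eq_card hv]

abbrev IsBiorthogonal {V ι : Type} [AddCommGroup V] [Module ℝ V] [DecidableEq ι]
    (c : ι → V →ₗ[ℝ] ℝ) (v : ι → V) : Prop :=
  ∀ i j, c i (v j) = if i = j then 1 else 0

theorem LinearIndependent.exists_isBiorthogonal {V ι : Type} [AddCommGroup V] [Module ℝ V]
    [DecidableEq ι] {v : ι → V} (hv : LinearIndependent ℝ v) :
    ∃ c : ι → V →ₗ[ℝ] ℝ, IsBiorthogonal c v := by
  let b := Module.Basis.span hv
  choose c hc using fun i => LinearMap.exists_extend (b.coord i)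
  refine ⟨c, fun i j => ?_⟩
  have hbj : (b j : V) = v j := by simp [b, Module.Basis.span_apply]
  rw [← hbj, ← Submodule.subtype_apply, ← LinearMap.comp_apply, hc, Module.Basis.coord_apply,
    Module.Basis.repr_self, Finsupp.single_apply]
  exact if_congr eq_comm rfl rfl

section Biorthogonal

variable {V : Type} [AddCommGroup V] [Module ℝ V] {ι : Type} [Fintype ι] [DecidableEq ι]
  {v : ι → V} {c : ι → V →ₗ[ℝ] ℝ}

theorem biorthogonal_apply_sum (hc : IsBiorthogonal c v)
    (r : ι → ℝ) (i : ι) : c i (∑ j, r j • v j) = r i := by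
  simp [hc]

theorem mem_coneHull_iff (hc : IsBiorthogonal c v) {x : V} :
    x ∈ coneHull v ↔ (∀ i, 0 ≤ c i x) ∧ x = ∑ i, c i x • v i := by
  constructor
  · rintro ⟨r, hr, rfl⟩
    simpa [biorthogonal_apply_sum hc] using hr
  · exact fun ⟨hx0, hx⟩ => ⟨_, hx0, hx⟩

theorem sum_biorthogonal_pos (hc : IsBiorthogonal c v) {x : V}
    (hx : x ∈ coneHull v) (hx0 : x ≠ 0) : 0 < (∑ i, c i) x := by
  obtain ⟨hnonneg, hx⟩ := (mem_coneHull_iff hc).1 hx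
  rw [LinearMap.sum_apply]
  refine (Finset.sum_nonneg fun i _ => hnonneg i).lt_of_ne fun hsum => hx0 ?_
  have hzero := (Finset.sum_eq_zero_iff_of_nonneg fun i _ => hnonneg i).1 hsum.symm
  rw [hx]
  exact Finset.sum_eq_zero fun i hi => by rw [hzero i hi, zero_smul]

theorem convexHull_range_eq_image_stdSimplex (v : ι → V) :
    convexHull ℝ (Set.range v) = Fintype.linearCombination ℝ v '' stdSimplex ℝ ι := by
  rw [← convexHull_rangle_single_eq_stdSimplex, LinearMap.image_convexHull, ← Set.range_comp]
  congr
  ext i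
  simp [Fintype.linearCombination_apply, Pi.single_apply]

theorem mem_convexHull_range_iff (hc : IsBiorthogonal c v) {x : V} :
    x ∈ convexHull ℝ (Set.range v) ↔
      (∀ i, 0 ≤ c i x) ∧ ∑ i, c i x = 1 ∧ x = ∑ i, c i x • v i := by
  rw [convexHull_range_eq_image_stdSimplex]
  constructor
  · rintro ⟨w, ⟨hw0, hw1⟩, rfl⟩
    simpa [Fintype.linearCombination_apply, biorthogonal_apply_sum hc] using ⟨hw0, hw1⟩
  · rintro ⟨hx0, hx1, hx⟩
    exact ⟨fun i => c i x, ⟨hx0, hx1⟩, by rw [Fintype.linearCombination_apply, ← hx]⟩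

theorem slice_coneHull_eq_convexHull (hc : IsBiorthogonal c v) :
    {x ∈ coneHull v | (∑ i, c i) x = 1} = convexHull ℝ (Set.range v) := by
  ext x
  rw [Set.mem_ofPred_eq, mem_coneHull_iff hc, mem_convexHull_range_iff hc, LinearMap.sum_apply]
  tauto

theorem mem_convexHull_image_iff (hc : IsBiorthogonal c v)
    (S : Finset ι) {x : V} :
    x ∈ convexHull ℝ (v '' S) ↔ x ∈ convexHull ℝ (Set.range v) ∧ ∀ j ∉ S, c j x = 0 := by
  constructor
  · intro hx
    refine ⟨convexHull_mono (Set.image_subset_range v S) hx, fun j hj => ?_⟩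
    refine convexHull_min (t := (LinearMap.ker (c j) : Set V)) ?_ (Submodule.convex _) hx
    rintro _ ⟨i, hi, rfl⟩
    simp [hc, show j ≠ i from fun h => hj (h ▸ hi)]
  · rintro ⟨hx, hxS⟩
    obtain ⟨hx0, hx1, hx⟩ := (mem_convexHull_range_iff hc).1 hx
    rw [← Finset.sum_subset (Finset.subset_univ S) fun i _ hi => by rw [hxS i hi]] at hx1
    rw [← Finset.sum_subset (Finset.subset_univ S) fun i _ hi => by rw [hxS i hi, zero_smul],
      ← Finset.centerMass_eq_of_sum_1 S v hx1] at hx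
    rw [hx]
    exact S.centerMass_mem_convexHull (fun i _ => hx0 i) (by rw [hx1]; exact one_pos)
      fun i hi => ⟨i, hi, rfl⟩

theorem apply_mem_convexHull_image_iff (hc : IsBiorthogonal c v)
    (S : Finset ι) (i : ι) : v i ∈ convexHull ℝ (v '' S) ↔ i ∈ S := by
  refine ⟨fun hi => ?_, fun hi => subset_convexHull ℝ _ ⟨i, hi, rfl⟩⟩
  by_contra hiS
  simpa [hc] using ((mem_convexHull_image_iff hc S).1 hi).2 i hiS

theorem apply_sub_eq_sum (hc : IsBiorthogonal c v) {x : V}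
    (hx : x ∈ convexHull ℝ (Set.range v)) (ψ : V →ₗ[ℝ] ℝ) (m : ℝ) :
    ψ x - m = ∑ i, c i x * (ψ (v i) - m) := by
  obtain ⟨-, hx1, hx⟩ := (mem_convexHull_range_iff hc).1 hx
  conv_lhs => rw [hx, ← mul_one m, ← hx1]
  simp [mul_sub, Finset.mul_sum, mul_comm]

theorem argmin_convexHull_range (hc : IsBiorthogonal c v)
    (ψ : V →ₗ[ℝ] ℝ) {S : Finset ι} {m : ℝ} (hS : S.Nonempty) (hSm : ∀ i ∈ S, ψ (v i) = m)
    (hm : ∀ i ∉ S, m < ψ (v i)) :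
    {u ∈ convexHull ℝ (Set.range v) | ∀ u' ∈ convexHull ℝ (Set.range v), ψ u ≤ ψ u'} =
      convexHull ℝ (v '' S) := by
  have hle : ∀ i, m ≤ ψ (v i) := fun i => by
    by_cases hi : i ∈ S
    exacts [(hSm i hi).ge, (hm i hi).le]
  have hterm : ∀ x ∈ convexHull ℝ (Set.range v), ∀ i, 0 ≤ c i x * (ψ (v i) - m) :=
    fun x hx i => mul_nonneg (((mem_convexHull_range_iff hc).1 hx).1 i) (sub_nonneg.2 (hle i))
  have hmin : ∀ x ∈ convexHull ℝ (Set.range v), m ≤ ψ x := fun x hx => by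
    linarith [apply_sub_eq_sum hc hx ψ m,
      Finset.sum_nonneg fun i (_ : i ∈ Finset.univ) => hterm x hx i]
  have heq : ∀ x ∈ convexHull ℝ (Set.range v), ψ x = m ↔ ∀ j ∉ S, c j x = 0 := by
    intro x hx
    rw [← sub_eq_zero, apply_sub_eq_sum hc hx,
      Finset.sum_eq_zero_iff_of_nonneg fun i _ => hterm x hx i]
    refine ⟨fun h j hj => ?_, fun h i _ => ?_⟩
    · exact (mul_eq_zero.1 (h j (Finset.mem_univ j))).resolve_right
        (sub_ne_zero.2 (hm j hj).ne')
    · by_cases hi : i ∈ S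
      · rw [hSm i hi, sub_self, mul_zero]
      · rw [h i hi, zero_mul]
  obtain ⟨i₀, hi₀⟩ := hS
  have hv₀ : v i₀ ∈ convexHull ℝ (Set.range v) := subset_convexHull ℝ _ ⟨i₀, rfl⟩
  ext u
  rw [Set.mem_ofPred_eq, mem_convexHull_image_iff hc]
  refine ⟨fun ⟨hu, humin⟩ => ⟨hu, (heq u hu).1 ?_⟩, fun ⟨hu, huS⟩ => ⟨hu, fun u' hu' => ?_⟩⟩
  · exact le_antisymm (hSm i₀ hi₀ ▸ humin _ hv₀) (hmin u hu)
  · rw [(heq u hu).2 huS]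
    exact hmin u' hu'

theorem faces_convexHull_range [Nonempty ι] (hc : IsBiorthogonal c v) :
    {τ : Set V | (∃ φ : V →ₗ[ℝ] ℝ, τ = {u ∈ convexHull ℝ (Set.range v) |
        ∀ u' ∈ convexHull ℝ (Set.range v), φ u ≤ φ u'}) ∧ τ ≠ convexHull ℝ (Set.range v)} =
      (fun S : Finset ι => convexHull ℝ (v '' S)) ''
        {S | S.Nonempty ∧ S ≠ Finset.univ} := by
  have hface_univ :
      convexHull ℝ (v '' (Finset.univ : Finset ι)) = convexHull ℝ (Set.range v) := by
    rw [Finset.coe_univ, Set.image_univ]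
  ext τ
  constructor
  · rintro ⟨⟨ψ, rfl⟩, hτ⟩
    obtain ⟨i₀, hi₀⟩ := Finite.exists_min fun i => ψ (v i)
    set S := Finset.univ.filter fun i => ψ (v i) = ψ (v i₀)
    have hτS := argmin_convexHull_range hc ψ (S := S) ⟨i₀, by simp [S]⟩ (by simp [S])
      fun i hi => (hi₀ i).lt_of_ne fun h => hi (by simp [S, h])
    refine ⟨S, ⟨⟨i₀, by simp [S]⟩, fun hS => hτ ?_⟩, hτS.symm⟩
    rw [hτS, hS, hface_univ]
  · rintro ⟨S, ⟨hS, hSuniv⟩, rfl⟩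
    obtain ⟨j, hj⟩ : ∃ j, j ∉ S := by simpa [Finset.eq_univ_iff_forall] using hSuniv
    have hψ : ∀ i, (∑ l ∈ Sᶜ, c l) (v i) = if i ∈ S then 0 else 1 := fun i => by
      by_cases hi : i ∈ S <;> simp [hc, hi]
    refine ⟨⟨∑ l ∈ Sᶜ, c l, (argmin_convexHull_range hc _ hS (m := 0)
      (fun i hi => by rw [hψ, if_pos hi])
      (fun i hi => by rw [hψ, if_neg hi]; exact one_pos)).symm⟩,
      fun h => hj ?_⟩
    rw [← apply_mem_convexHull_image_iff hc, show convexHull ℝ (v '' S) = _ from h]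
    exact subset_convexHull ℝ _ ⟨j, rfl⟩

theorem injOn_convexHull_image (hc : IsBiorthogonal c v)
    (s : Set (Finset ι)) : s.InjOn fun S : Finset ι => convexHull ℝ (v '' S) := by
  intro S _ S' _ h
  ext i
  rw [← apply_mem_convexHull_image_iff hc, ← apply_mem_convexHull_image_iff hc S']
  exact Set.ext_iff.1 h (v i)

end Biorthogonal

theorem finrank_vectorSpan_convexHull_image {V ι : Type} [AddCommGroup V] [Module ℝ V]
    {v : ι → V} (hv : LinearIndependent ℝ v) {S : Finset ι} (hS : S.Nonempty) :
    Module.finrank ℝ (vectorSpan ℝ (convexHull ℝ (v '' S))) = S.card - 1 := by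
  classical
  rw [← direction_affineSpan, affineSpan_convexHull, direction_affineSpan, ← Finset.coe_image]
  exact hv.affineIndependent.finrank_vectorSpan_image_finset (by have := hS.card_pos; omega)

theorem sum_smul_sub_mem_coneOfFaceSet {V κ : Type} [AddCommGroup V] [Module ℝ V] [Fintype κ]
    {Δ τ : Set V} (t : κ → ℝ) (p q : κ → V) (ht : ∀ l, 0 ≤ t l) (hp : ∀ l, p l ∈ Δ)
    (hq : ∀ l, q l ∈ τ) : ∑ l, t l • (p l - q l) ∈ coneOfFaceSet V Δ τ := by
  let e := (Fintype.equivFin κ).symm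
  exact ⟨_, t ∘ e, p ∘ e, q ∘ e, fun _ => ht _, fun _ => hp _, fun _ => hq _,
    (e.sum_comp fun l => t l • (p l - q l)).symm⟩

section Quotient

variable {V : Type} [AddCommGroup V] [Module ℝ V] {ι : Type} [Fintype ι] [DecidableEq ι]
  {v : ι → V} {c : ι → V →ₗ[ℝ] ℝ} {S : Finset ι} {i₀ : ι}

theorem vectorSpan_convexHull_image_le_ker (hc : IsBiorthogonal c v)
    {j : ι} (hj : j ∉ S) : vectorSpan ℝ (convexHull ℝ (v '' S)) ≤ LinearMap.ker (c j) := by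
  rw [vectorSpan_def, Submodule.span_le]
  rintro _ ⟨x, hx, y, hy, rfl⟩
  simp [((mem_convexHull_image_iff hc S).1 hx).2 j hj,
    ((mem_convexHull_image_iff hc S).1 hy).2 j hj]

theorem linearIndependent_mkQ_sub (hc : IsBiorthogonal c v)
    (hi₀ : i₀ ∈ S) :
    LinearIndependent ℝ fun j : {j // j ∉ S} =>
      (vectorSpan ℝ (convexHull ℝ (v '' S))).mkQ (v j - v i₀) := by
  set W := vectorSpan ℝ (convexHull ℝ (v '' S))
  let f : {j // j ∉ S} → Module.Dual ℝ (V ⧸ W) := fun j =>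
    W.liftQ (c j) (vectorSpan_convexHull_image_le_ker hc j.2)
  have hf : ∀ j l : {j // j ∉ S}, f j (W.mkQ (v l - v i₀)) = if j = l then 1 else 0 := by
    intro j l
    have hj₀ : (j : ι) ≠ i₀ := fun h => j.2 (h ▸ hi₀)
    simp [f, hc, hj₀, Subtype.ext_iff]
  exact .of_pairwise_dual_eq_zero_one _ f (fun j l hjl => (hf j l).trans (if_neg hjl))
    fun j => (hf j j).trans (if_pos rfl)

theorem sub_eq_sum_smul_sub (hc : IsBiorthogonal c v) {p : V}
    (hp : p ∈ convexHull ℝ (Set.range v)) (i₀ : ι) : p - v i₀ = ∑ i, c i p • (v i - v i₀) := by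
  obtain ⟨-, hp1, hp⟩ := (mem_convexHull_range_iff hc).1 hp
  simp_rw [smul_sub, Finset.sum_sub_distrib, ← Finset.sum_smul, hp1, one_smul, ← hp]

theorem mkQ_sub_mem_coneHull (hc : IsBiorthogonal c v) (hi₀ : i₀ ∈ S)
    {p q : V} (hp : p ∈ convexHull ℝ (Set.range v)) (hq : q ∈ convexHull ℝ (v '' S)) :
    (vectorSpan ℝ (convexHull ℝ (v '' S))).mkQ (p - q) ∈
      coneHull fun j : {j // j ∉ S} =>
        (vectorSpan ℝ (convexHull ℝ (v '' S))).mkQ (v j - v i₀) := by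
  set W := vectorSpan ℝ (convexHull ℝ (v '' S))
  have hv : ∀ i ∈ S, v i ∈ convexHull ℝ (v '' S) := fun i hi =>
    subset_convexHull ℝ _ ⟨i, hi, rfl⟩
  have hpq : W.mkQ (p - q) = W.mkQ (p - v i₀) := by
    rw [Submodule.mkQ_apply, Submodule.mkQ_apply, Submodule.Quotient.eq]
    simpa using vsub_mem_vectorSpan ℝ (hv i₀ hi₀) hq
  have hvS : ∀ i : {i // i ∈ S}, c i p • W.mkQ (v i - v i₀) = 0 := fun i => by
    rw [Submodule.mkQ_apply, (Submodule.Quotient.mk_eq_zero W).2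
      (by simpa using vsub_mem_vectorSpan ℝ (hv i i.2) (hv i₀ hi₀)), smul_zero]
  refine ⟨fun j => c j p, fun j => ((mem_convexHull_range_iff hc).1 hp).1 j, ?_⟩
  rw [hpq, sub_eq_sum_smul_sub hc hp, map_sum, ← Fintype.sum_subtype_add_sum_subtype (· ∈ S)]
  simp only [map_smul, hvS, Finset.sum_const_zero, zero_add]

theorem mkQ_image_coneOfFaceSet (hc : IsBiorthogonal c v)
    (hi₀ : i₀ ∈ S) :
    (vectorSpan ℝ (convexHull ℝ (v '' S))).mkQ ''
        coneOfFaceSet V (convexHull ℝ (Set.range v)) (convexHull ℝ (v '' S)) =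
      coneHull fun j : {j // j ∉ S} =>
        (vectorSpan ℝ (convexHull ℝ (v '' S))).mkQ (v j - v i₀) := by
  apply Set.Subset.antisymm
  · rintro _ ⟨_, ⟨m, t, p, q, ht, hp, hq, rfl⟩, rfl⟩
    simp only [map_sum, map_smul]
    exact sum_smul_mem_coneHull t ht fun l => mkQ_sub_mem_coneHull hc hi₀ (hp l) (hq l)
  · rintro _ ⟨r, hr, rfl⟩
    refine ⟨∑ j, r j • (v j - v i₀), sum_smul_sub_mem_coneOfFaceSet r _ _ hr
      (fun j => subset_convexHull ℝ _ ⟨j, rfl⟩)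
      (fun _ => subset_convexHull ℝ _ ⟨i₀, hi₀, rfl⟩), ?_⟩
    simp only [map_sum, map_smul]

end Quotient

theorem one_sub_mul_sum_nonempty {R : Type*} [CommRing R] (ι : Type*) [Fintype ι] (a : R) :
    (1 - a) * ∑ S ∈ Finset.univ.filter (fun S : Finset ι => S.Nonempty),
      (a - 1) ^ (S.card - 1) =
      1 - a ^ Fintype.card ι := by
  classical
  have hfilter : Finset.univ.filter (fun S : Finset ι => S.Nonempty) = Finset.univ.erase ∅ := by
    ext S
    simp [Finset.nonempty_iff_ne_empty]
  have hbinom : ∑ S : Finset ι, (a - 1) ^ S.card = a ^ Fintype.card ι := by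
    simpa using Fintype.sum_pow_mul_eq_add_pow ι (a - 1) 1
  have hterm : ∀ S ∈ Finset.univ.erase (∅ : Finset ι),
      (1 - a) * (a - 1) ^ (S.card - 1) = -(a - 1) ^ S.card := fun S hS => by
    obtain ⟨n, hn⟩ := Nat.exists_eq_add_one_of_ne_zero
      (Finset.card_ne_zero.2 (Finset.nonempty_iff_ne_empty.2 (Finset.ne_of_mem_erase hS)))
    rw [hn, Nat.add_sub_cancel, pow_succ]
    ring
  rw [hfilter, Finset.mul_sum, Finset.sum_congr rfl hterm, Finset.sum_neg_distrib, ← hbinom,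
    ← Finset.add_sum_erase _ _ (Finset.mem_univ ∅), Finset.card_empty, pow_zero]
  ring

theorem one_sub_modByMonic_X_pow {R : Type*} [CommRing R] [Nontrivial R] {n : ℕ} (hn : 0 < n)
    {p : R[X]} (hp : X ^ n ∣ p) : (1 - p) %ₘ X ^ n = 1 := by
  rw [sub_modByMonic, (modByMonic_eq_zero_iff_dvd (monic_X_pow n)).2 hp, sub_zero,
    modByMonic_eq_self_iff (monic_X_pow n), degree_one, degree_X_pow]
  exact_mod_cast hn

structure IsStanleyPair (α β : ∀ (V : Type) [AddCommGroup V] [Module ℝ V], Set V → ℤ[X]) :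
    Prop where
  alpha_zero : ∀ (V : Type) [AddCommGroup V] [Module ℝ V], α V ({0} : Set V) = 1
  beta_eq : ∀ (V : Type) [AddCommGroup V] [Module ℝ V] [FiniteDimensional ℝ V]
      (Δ : Set V), (∃ s : Finset V, Δ = convexHull ℝ (↑s : Set V)) →
      β V Δ = (X ^ 2 - 1) ^ (Module.finrank ℝ (vectorSpan ℝ Δ))
        + ∑ᶠ τ ∈ {τ : Set V |
            (∃ φ : V →ₗ[ℝ] ℝ, τ = {u ∈ Δ | ∀ u' ∈ Δ, φ u ≤ φ u'}) ∧ τ ≠ Δ},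
          (X ^ 2 - 1) ^ (Module.finrank ℝ (vectorSpan ℝ τ)) *
            α (V ⧸ vectorSpan ℝ τ)
              ((vectorSpan ℝ τ).mkQ '' coneOfFaceSet V Δ τ)
  alpha_eq : ∀ (V : Type) [AddCommGroup V] [Module ℝ V] [FiniteDimensional ℝ V]
      (δ : Set V),
      (∃ (k : ℕ) (v : Fin k → V),
        δ = {x | ∃ r : Fin k → ℝ, (∀ i, 0 ≤ r i) ∧ x = ∑ i, r i • v i}) →
      δ ≠ ({0} : Set V) →
      ∀ φ : V →ₗ[ℝ] ℝ, (∀ x ∈ δ, x ≠ 0 → 0 < φ x) →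
      α V δ = ((1 - X ^ 2) * β V {x ∈ δ | φ x = 1}) %ₘ
        (X ^ (Module.finrank ℝ (vectorSpan ℝ δ)))

namespace IsStanleyPair

variable {α β : ∀ (V : Type) [AddCommGroup V] [Module ℝ V], Set V → ℤ[X]}

theorem beta_convexHull_range (h : IsStanleyPair α β) {V : Type} [AddCommGroup V] [Module ℝ V]
    [FiniteDimensional ℝ V] {ι : Type} [Fintype ι] [Nonempty ι] {v : ι → V}
    (hv : LinearIndependent ℝ v)
    (ih : ∀ (W : Type) [AddCommGroup W] [Module ℝ W] [FiniteDimensional ℝ W] (κ : Type)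
      [Fintype κ] (w : κ → W), Fintype.card κ < Fintype.card ι → LinearIndependent ℝ w →
      α W (coneHull w) = 1) :
    β V (convexHull ℝ (Set.range v)) =
      ∑ S ∈ Finset.univ.filter (fun S : Finset ι => S.Nonempty), (X ^ 2 - 1) ^ (S.card - 1) := by
  classical
  obtain ⟨c, hc⟩ := hv.exists_isBiorthogonal
  have hface : ∀ S ∈ {S : Finset ι | S.Nonempty ∧ S ≠ Finset.univ},
      (X ^ 2 - 1) ^ Module.finrank ℝ (vectorSpan ℝ (convexHull ℝ (v '' S))) *
        α (V ⧸ vectorSpan ℝ (convexHull ℝ (v '' S)))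
          ((vectorSpan ℝ (convexHull ℝ (v '' S))).mkQ ''
            coneOfFaceSet V (convexHull ℝ (Set.range v)) (convexHull ℝ (v '' S))) =
        (X ^ 2 - 1) ^ (S.card - 1) := by
    rintro S ⟨⟨i₀, hi₀⟩, -⟩
    rw [finrank_vectorSpan_convexHull_image hv ⟨i₀, hi₀⟩, mkQ_image_coneOfFaceSet hc hi₀,
      ih _ _ _ (Fintype.card_subtype_lt (not_not.2 hi₀)) (linearIndependent_mkQ_sub hc hi₀),
      mul_one]
  have hproper : {S : Finset ι | S.Nonempty ∧ S ≠ Finset.univ} =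
      ↑((Finset.univ.filter fun S : Finset ι => S.Nonempty).erase Finset.univ) := by
    ext S
    simp
  have hdim : Module.finrank ℝ (vectorSpan ℝ (convexHull ℝ (Set.range v))) =
      (Finset.univ : Finset ι).card - 1 := by
    rw [← finrank_vectorSpan_convexHull_image hv Finset.univ_nonempty, Finset.coe_univ,
      Set.image_univ]
  rw [h.beta_eq V _ ⟨Finset.univ.image v, by simp⟩, faces_convexHull_range hc,
    finsum_mem_image (injOn_convexHull_image hc _), finsum_mem_congr rfl hface, hproper,
    finsum_mem_coe_finset, hdim]
  exact Finset.add_sum_erase _ (fun S : Finset ι => (X ^ 2 - 1 : ℤ[X]) ^ (S.card - 1))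
    (by simp [Finset.univ_nonempty])

theorem alpha_coneHull_eq_one (h : IsStanleyPair α β) {V : Type} [AddCommGroup V] [Module ℝ V]
    [FiniteDimensional ℝ V] {ι : Type} [Fintype ι] {v : ι → V} (hv : LinearIndependent ℝ v) :
    α V (coneHull v) = 1 := by
  classical
  rcases isEmpty_or_nonempty ι with _ | _
  · rw [coneHull_of_isEmpty, h.alpha_zero]
  obtain ⟨c, hc⟩ := hv.exists_isBiorthogonal
  have hcone : coneHull v = coneHull (v ∘ (Fintype.equivFin ι).symm) :=
    (coneHull_comp_equiv _ v).symm
  rw [h.alpha_eq V _ ⟨_, _, hcone⟩ (coneHull_ne_singleton_zero hv) _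
      fun x hx hx0 => sum_biorthogonal_pos hc hx hx0,
    slice_coneHull_eq_convexHull hc, finrank_vectorSpan_coneHull hv,
    h.beta_convexHull_range hv fun W _ _ _ κ _ w hκ hw => h.alpha_coneHull_eq_one hw,
    one_sub_mul_sum_nonempty]
  exact one_sub_modByMonic_X_pow Fintype.card_pos
    (pow_dvd_pow_of_dvd (dvd_pow_self X two_ne_zero) _)
termination_by Fintype.card ι

end IsStanleyPair

/-- Stanley's polynomials `α` (on cones) and `β` (on polytopes) are defined by
mutual induction:
* `α({0}) = 1`;
* `β(Δ) = (T²-1)^{dim Δ} + ∑_{τ proper face of Δ} (T²-1)^{dim τ} α(cone°_Δ(τ))`,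
  where `cone°_Δ(τ)` is the image of `cone_Δ(τ)` in `V / span(τ-τ)`;
* `α(δ) = trunc_{≤ dim δ - 1}((1-T²) β(poly(δ)))`, where `poly(δ)` is the
  intersection of `δ` with a hyperplane `{φ = 1}` positive on `δ \ {0}`.

Then for any `α`, `β` satisfying these recursions and any simplicial cone `δ`
(generated by linearly independent vectors), `α(δ) = 1`. -/
theorem alpha_simplicial_cone_eq_one
    (α β : ∀ (V : Type) [AddCommGroup V] [Module ℝ V], Set V → Polynomial ℤ)
    (hα0 : ∀ (V : Type) [AddCommGroup V] [Module ℝ V],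
      α V ({0} : Set V) = 1)
    (hβ : ∀ (V : Type) [AddCommGroup V] [Module ℝ V] [FiniteDimensional ℝ V]
      (Δ : Set V), (∃ s : Finset V, Δ = convexHull ℝ (↑s : Set V)) →
      β V Δ = (X ^ 2 - 1) ^ (Module.finrank ℝ (vectorSpan ℝ Δ))
        + ∑ᶠ τ ∈ {τ : Set V |
            (∃ φ : V →ₗ[ℝ] ℝ, τ = {u ∈ Δ | ∀ u' ∈ Δ, φ u ≤ φ u'}) ∧ τ ≠ Δ},
          (X ^ 2 - 1) ^ (Module.finrank ℝ (vectorSpan ℝ τ)) *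
            α (V ⧸ vectorSpan ℝ τ)
              ((vectorSpan ℝ τ).mkQ '' coneOfFaceSet V Δ τ))
    (hα : ∀ (V : Type) [AddCommGroup V] [Module ℝ V] [FiniteDimensional ℝ V]
      (δ : Set V),
      (∃ (k : ℕ) (v : Fin k → V),
        δ = {x | ∃ r : Fin k → ℝ, (∀ i, 0 ≤ r i) ∧ x = ∑ i, r i • v i}) →
      δ ≠ ({0} : Set V) →
      ∀ φ : V →ₗ[ℝ] ℝ, (∀ x ∈ δ, x ≠ 0 → 0 < φ x) →
      α V δ = ((1 - X ^ 2) * β V {x ∈ δ | φ x = 1}) %ₘ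
        (X ^ (Module.finrank ℝ (vectorSpan ℝ δ)))) :
    ∀ (V : Type) [AddCommGroup V] [Module ℝ V] [FiniteDimensional ℝ V]
      (δ : Set V) (k : ℕ) (v : Fin k → V), LinearIndependent ℝ v →
      δ = {x | ∃ r : Fin k → ℝ, (∀ i, 0 ≤ r i) ∧ x = ∑ i, r i • v i} →
      α V δ = 1 := by
  rintro V _ _ _ δ k v hv rfl
  exact (IsStanleyPair.mk hα0 hβ hα).alpha_coneHull_eq_one hv
end
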